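/- Let R be a commutative Noetherian ring of prime characteristic p whose Frobenius endomorphism is finite and flat, let a be an ideal of R, and let m be a positive integer. Then for every real number c ≥ 0 one has τ((a^m)^c) = τ(a^{c m}). -/

import Mathlib

open Ideal

/-- The `q`-th bracket power `J^{[q]}` of an ideal: the ideal generated by
the `q`-th powers of the elements of `J`. -/
def bracketPow {R : Type*} [CommRing R] (J : Ideal R) (q : ℕ) : Ideal R :=
  Ideal.span ((fun x => x ^ q) '' (J : Set R))

/-- The ideal `b^{[1/q]}`: the smallest ideal `J` with `b ⊆ J^{[q]}`
(realized as the intersection of all such ideals). -/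
def frobRoot {R : Type*} [CommRing R] (b : Ideal R) (q : ℕ) : Ideal R :=
  sInf {J : Ideal R | b ≤ bracketPow J q}

/-- The generalized test ideal `τ(a^c) = ⋃_{e ≥ 1} (a^{⌈c p^e⌉})^{[1/p^e]}`. -/
noncomputable def testIdeal {R : Type*} [CommRing R] (p : ℕ) (a : Ideal R) (c : ℝ) : Ideal R :=
  ⨆ e : ℕ, frobRoot (a ^ ⌈c * (p : ℝ) ^ (e + 1)⌉₊) (p ^ (e + 1))

/-- `ν_a^J(q)`: the largest nonnegative integer `r` with `a^r ⊄ J^{[q]}`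
(and `0` if there is no such `r`). -/
noncomputable def nuF {R : Type*} [CommRing R] (a J : Ideal R) (q : ℕ) : ℕ :=
  sSup {r : ℕ | ¬ a ^ r ≤ bracketPow J q}

/-- The F-threshold `c^J(a) = sup_{e ≥ 1} ν_a^J(p^e)/p^e`. -/
noncomputable def FThreshold {R : Type*} [CommRing R] (p : ℕ) (a J : Ideal R) : ℝ :=
  ⨆ e : ℕ, (nuF a J (p ^ (e + 1)) : ℝ) / (p : ℝ) ^ (e + 1)

/-- `α > 0` is an F-jumping exponent of `a` if `τ(a^α) ≠ τ(a^c)` for all `0 ≤ c < α`. -/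
def IsFJumpingExponent {R : Type*} [CommRing R] (p : ℕ) (a : Ideal R) (α : ℝ) : Prop :=
  0 < α ∧ ∀ c : ℝ, 0 ≤ c → c < α → testIdeal p a c ≠ testIdeal p a α

/-!
Finiteness and flatness of Frobenius make `R` projective over itself via each `F^e`, so that
`b ⊆ (b^{[1/q]})^{[q]}` and `(K^{[q]} : z^q) = (K : z)^{[q]}`; in particular `R` is reduced.
Then `τ((a^m)^c) ⊆ τ(a^{cm})` because `⌈cmq⌉ ≤ m⌈cq⌉`. Conversely, for `z ∈ a^{⌈cmq⌉}` and
`K = τ((a^m)^c)^{[q]}` one has `z^{m-1} z^{q'} ∈ K^{[q']}` for every `q' = p^t`, since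
`m⌈cqq'⌉ ≤ ⌈cmq⌉(m - 1 + q')`. So `z^{m-1}` lies in every power of `L = (K : z)`; Krull's
intersection theorem gives `r ∈ L` with `(1 - r) z^{m-1} = 0`, and as `R` is reduced,
`z = r z ∈ K`.
-/

/-- Coordinates exhibiting `S` as a projective `R`-module via `f` (the dual basis lemma). -/
structure ProjectiveCoords {R S : Type*} [CommRing R] [CommRing S] (f : R →+* S) where
  coord : S →+ (S →₀ R)
  coord_mul : ∀ r x, coord (f r * x) = r • coord x
  sum_coord : ∀ x, (coord x).sum (fun i c => f c * i) = x

namespace ProjectiveCoords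

variable {R S : Type*} [CommRing R] [CommRing S] {f : R →+* S}

theorem nonempty_of_finite_of_flat [IsNoetherianRing R] (hfin : f.Finite) (hflat : f.Flat) :
    Nonempty (ProjectiveCoords f) := by
  algebraize [f]
  have : Module.FinitePresentation R S := Module.finitePresentation_of_finite R S
  obtain ⟨s, hs⟩ :=
    Module.projective_def.mp (Module.Flat.projective_of_finitePresentation (R := R) (M := S))
  refine ⟨⟨s.toAddMonoidHom, fun r x => ?_, fun x => ?_⟩⟩
  · exact (Algebra.smul_def r x) ▸ s.map_smul r x
  · have h := hs x
    simp only [Finsupp.linearCombination_apply, Algebra.smul_def, id] at h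
    exact h

theorem mem_map_iff (P : ProjectiveCoords f) (J : Ideal R) (x : S) :
    x ∈ J.map f ↔ ∀ i, P.coord x i ∈ J := by
  refine ⟨fun hx => ?_, fun hx => ?_⟩
  · suffices ∀ s i, P.coord (s * x) i ∈ J by simpa using this 1
    induction hx using Submodule.span_induction with
    | mem y hy =>
      obtain ⟨j, hj, rfl⟩ := hy
      intro s i
      rw [mul_comm, P.coord_mul, Finsupp.smul_apply, smul_eq_mul]
      exact J.mul_mem_right _ hj
    | zero => simp
    | add y z _ _ hy hz => intro s i; simpa [mul_add] using J.add_mem (hy s i) (hz s i)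
    | smul t y _ hy => intro s i; simpa [mul_assoc] using hy (s * t) i
  · rw [← P.sum_coord x]
    exact Ideal.sum_mem _ fun i _ => Ideal.mul_mem_right _ _ (Ideal.mem_map_of_mem f (hx i))

theorem le_map_sInf (P : ProjectiveCoords f) (b : Ideal S) :
    b ≤ (sInf {J : Ideal R | b ≤ J.map f}).map f :=
  fun x hx => (P.mem_map_iff _ x).2 fun i =>
    Submodule.mem_sInf.2 fun J hJ => (P.mem_map_iff J x).1 (hJ hx) i

theorem mem_map_colon_of_mul_mem (P : ProjectiveCoords f) {K : Ideal R} {z : R} {w : S}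
    (h : w * f z ∈ K.map f) : w ∈ (K.colon (Ideal.span {z})).map f := by
  rw [mul_comm, P.mem_map_iff, P.coord_mul] at h
  refine (P.mem_map_iff _ w).2 fun i => Ideal.mem_colon_span_singleton.2 ?_
  simpa [mul_comm] using h i

end ProjectiveCoords

section Ceil

variable {α : Type*} [CommRing α] [LinearOrder α] [IsStrictOrderedRing α] [FloorSemiring α]

theorem Nat.ceil_natCast_mul_le (m : ℕ) (x : α) : ⌈m * x⌉₊ ≤ m * ⌈x⌉₊ :=
  Nat.ceil_le.2 <| by
    push_cast
    exact mul_le_mul_of_nonneg_left (Nat.le_ceil x) m.cast_nonneg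

theorem Nat.mul_ceil_mul_le (x : α) (m q : ℕ) : m * ⌈x * q⌉₊ ≤ ⌈m * x⌉₊ * (m - 1 + q) := by
  rcases le_or_gt x 0 with hx | hx
  · simp [Nat.ceil_eq_zero.2 (mul_nonpos_of_nonpos_of_nonneg hx q.cast_nonneg)]
  rcases Nat.eq_zero_or_pos m with rfl | hm
  · simp
  have hB : 0 < ⌈m * x⌉₊ := Nat.ceil_pos.2 (by positivity)
  have key : m * ⌈x * q⌉₊ < ⌈m * x⌉₊ * q + m := by
    have h1 : (⌈x * q⌉₊ : α) < x * q + 1 := Nat.ceil_lt_add_one (by positivity)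
    have h2 : (m : α) * x ≤ ⌈m * x⌉₊ := Nat.le_ceil _
    have hm' : (0 : α) < m := by exact_mod_cast hm
    have : (m : α) * ⌈x * q⌉₊ < ⌈m * x⌉₊ * q + m := by
      nlinarith [mul_le_mul_of_nonneg_right h2 q.cast_nonneg]
    exact_mod_cast this
  have : m - 1 ≤ ⌈m * x⌉₊ * (m - 1) := Nat.le_mul_of_pos_left _ hB
  rw [mul_add]
  omega

end Ceil

section BracketPow

variable {R : Type*} [CommRing R]

theorem bracketPow_mono {I J : Ideal R} (h : I ≤ J) (q : ℕ) : bracketPow I q ≤ bracketPow J q :=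
  Ideal.span_mono (Set.image_mono h)

theorem bracketPow_le_pow (I : Ideal R) (q : ℕ) : bracketPow I q ≤ I ^ q := by
  rw [bracketPow, Ideal.span_le]
  rintro _ ⟨x, hx, rfl⟩
  exact Ideal.pow_mem_pow hx q

theorem frobRoot_le {b J : Ideal R} {q : ℕ} (h : b ≤ bracketPow J q) : frobRoot b q ≤ J :=
  sInf_le h

theorem testIdeal_le (p : ℕ) {a J : Ideal R} {c : ℝ}
    (h : ∀ e, a ^ ⌈c * (p : ℝ) ^ (e + 1)⌉₊ ≤ bracketPow J (p ^ (e + 1))) :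
    testIdeal p a c ≤ J :=
  iSup_le fun e => frobRoot_le (h e)

end BracketPow

section Frobenius

variable {R : Type*} [CommRing R] (p : ℕ) [ExpChar R p]

theorem bracketPow_pow_eq_map (J : Ideal R) (e : ℕ) :
    bracketPow J (p ^ e) = J.map (iterateFrobenius R p e) :=
  rfl

theorem bracketPow_bracketPow (J : Ideal R) (e f : ℕ) :
    bracketPow (bracketPow J (p ^ e)) (p ^ f) = bracketPow J (p ^ (e + f)) := by
  simp only [bracketPow_pow_eq_map, Ideal.map_map, ← iterateFrobenius_add, add_comm]

theorem RingHom.Finite.iterateFrobenius (hfin : (frobenius R p).Finite) (e : ℕ) :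
    (iterateFrobenius R p e).Finite := by
  induction e with
  | zero => simpa using RingHom.Finite.id R
  | succ e ih =>
    rw [iterateFrobenius_add, iterateFrobenius_one]
    exact ih.comp hfin

theorem RingHom.Flat.iterateFrobenius (hflat : (frobenius R p).Flat) (e : ℕ) :
    (iterateFrobenius R p e).Flat := by
  induction e with
  | zero => simpa using RingHom.Flat.id R
  | succ e ih =>
    rw [iterateFrobenius_add, iterateFrobenius_one]
    exact hflat.comp ih

variable [IsNoetherianRing R]

theorem nonempty_projectiveCoords_iterateFrobenius (hfin : (frobenius R p).Finite)
    (hflat : (frobenius R p).Flat) (e : ℕ) :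
    Nonempty (ProjectiveCoords (iterateFrobenius R p e)) :=
  ProjectiveCoords.nonempty_of_finite_of_flat (hfin.iterateFrobenius p e)
    (hflat.iterateFrobenius p e)

theorem le_bracketPow_frobRoot (hfin : (frobenius R p).Finite) (hflat : (frobenius R p).Flat)
    (b : Ideal R) (e : ℕ) : b ≤ bracketPow (frobRoot b (p ^ e)) (p ^ e) := by
  simp only [frobRoot, bracketPow_pow_eq_map]
  exact (nonempty_projectiveCoords_iterateFrobenius p hfin hflat e).some.le_map_sInf b

theorem isReduced_of_frobenius_finite_flat (hp : 1 < p) (hfin : (frobenius R p).Finite)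
    (hflat : (frobenius R p).Flat) : IsReduced R := by
  obtain ⟨P⟩ := ProjectiveCoords.nonempty_of_finite_of_flat hfin hflat
  refine (isReduced_iff_pow_one_lt p hp).2 fun x hx => ?_
  set L := (⊥ : Ideal R).colon (Ideal.span {x})
  have h1 : (1 : R) ∈ L.map (frobenius R p) :=
    P.mem_map_colon_of_mul_mem (by simp [frobenius_def, hx])
  have hL : L.map (frobenius R p) ≤ L :=
    Ideal.map_le_iff_le_comap.2 fun y hy => L.pow_mem_of_mem hy p (by omega)
  simpa using Ideal.mem_colon_span_singleton.1 (hL h1)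

theorem mem_of_forall_pow_add_mem_bracketPow (hp : 1 < p) (hfin : (frobenius R p).Finite)
    (hflat : (frobenius R p).Flat) {K : Ideal R} {z : R} (n : ℕ)
    (H : ∀ t, z ^ (n + p ^ t) ∈ bracketPow K (p ^ t)) : z ∈ K := by
  have := isReduced_of_frobenius_finite_flat p hp hfin hflat
  set L := K.colon (Ideal.span {z})
  have hL : ∀ t, z ^ n ∈ L ^ t • (⊤ : Ideal R) := fun t => by
    obtain ⟨P⟩ := nonempty_projectiveCoords_iterateFrobenius p hfin hflat t
    have h : z ^ n * iterateFrobenius R p t z ∈ K.map (iterateFrobenius R p t) := by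
      rw [iterateFrobenius_def, ← pow_add]
      exact H t
    rw [smul_eq_mul, Ideal.mul_top]
    exact Ideal.pow_le_pow_right (Nat.lt_pow_self hp).le
      (bracketPow_le_pow L _ (P.mem_map_colon_of_mul_mem h))
  obtain ⟨r, hr⟩ := (L.mem_iInf_smul_pow_eq_bot_iff (z ^ n)).1 (Submodule.mem_iInf _ |>.2 hL)
  rw [smul_eq_mul] at hr
  have hnil : IsNilpotent ((1 - r) * z) :=
    ⟨n + 1, by rw [mul_pow]; linear_combination -(1 - (r : R)) ^ n * z * hr⟩
  have hz : z = r * z := by linear_combination hnil.eq_zero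
  exact hz ▸ Ideal.mem_colon_span_singleton.1 r.2

theorem pow_ceil_le_bracketPow_testIdeal (hfin : (frobenius R p).Finite)
    (hflat : (frobenius R p).Flat) (a : Ideal R) (c : ℝ) (e : ℕ) :
    a ^ ⌈c * (p : ℝ) ^ (e + 1)⌉₊ ≤ bracketPow (testIdeal p a c) (p ^ (e + 1)) :=
  (le_bracketPow_frobRoot p hfin hflat _ _).trans <| bracketPow_mono
    (le_iSup (fun e => frobRoot (a ^ ⌈c * (p : ℝ) ^ (e + 1)⌉₊) (p ^ (e + 1))) e) _

theorem testIdeal_pow_le (hfin : (frobenius R p).Finite) (hflat : (frobenius R p).Flat)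
    (a : Ideal R) (m : ℕ) (c : ℝ) : testIdeal p (a ^ m) c ≤ testIdeal p a (c * m) :=
  testIdeal_le p fun e => calc
    (a ^ m) ^ ⌈c * (p : ℝ) ^ (e + 1)⌉₊ ≤ a ^ ⌈c * m * (p : ℝ) ^ (e + 1)⌉₊ := by
      rw [← pow_mul]
      refine Ideal.pow_le_pow_right ?_
      rw [show c * m * (p : ℝ) ^ (e + 1) = m * (c * (p : ℝ) ^ (e + 1)) by ring]
      exact Nat.ceil_natCast_mul_le m (c * (p : ℝ) ^ (e + 1))
    _ ≤ bracketPow (testIdeal p a (c * m)) (p ^ (e + 1)) :=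
      pow_ceil_le_bracketPow_testIdeal p hfin hflat a _ e

theorem testIdeal_le_testIdeal_pow (hp : 1 < p) (hfin : (frobenius R p).Finite)
    (hflat : (frobenius R p).Flat) (a : Ideal R) (m : ℕ) (c : ℝ) :
    testIdeal p a (c * m) ≤ testIdeal p (a ^ m) c := by
  refine testIdeal_le p fun e z hz =>
    mem_of_forall_pow_add_mem_bracketPow p hp hfin hflat (m - 1) fun t => ?_
  rw [bracketPow_bracketPow, add_right_comm]
  refine pow_ceil_le_bracketPow_testIdeal p hfin hflat (a ^ m) c (e + t) ?_
  have hexp : m * ⌈c * (p : ℝ) ^ (e + t + 1)⌉₊ ≤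
      ⌈c * m * (p : ℝ) ^ (e + 1)⌉₊ * (m - 1 + p ^ t) := by
    have h1 : c * (p : ℝ) ^ (e + t + 1) = c * (p : ℝ) ^ (e + 1) * (p ^ t : ℕ) := by
      push_cast; ring
    have h2 : c * m * (p : ℝ) ^ (e + 1) = m * (c * (p : ℝ) ^ (e + 1)) := by ring
    rw [h1, h2]
    exact Nat.mul_ceil_mul_le _ m (p ^ t)
  rw [← pow_mul]
  exact Ideal.pow_le_pow_right hexp (pow_mul a _ _ ▸ Ideal.pow_mem_pow hz _)

end Frobenius

theorem stmt8_testIdeal_pow_general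
    {R : Type*} [CommRing R] [IsNoetherianRing R] (p : ℕ) [Fact p.Prime] [CharP R p]
    (hfin : (frobenius R p).Finite) (hflat : (frobenius R p).Flat)
    (a : Ideal R) (m : ℕ) (c : ℝ) :
    testIdeal p (a ^ m) c = testIdeal p a (c * m) :=
  le_antisymm (testIdeal_pow_le p hfin hflat a m c)
    (testIdeal_le_testIdeal_pow p (Fact.out : p.Prime).one_lt hfin hflat a m c)

/-- `τ((a^m)^c) = τ(a^{cm})`. -/
theorem stmt8_testIdeal_pow
    {R : Type*} [CommRing R] [IsNoetherianRing R] (p : ℕ) [Fact p.Prime] [CharP R p]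
    (hfin : (frobenius R p).Finite) (hflat : (frobenius R p).Flat)
    (a : Ideal R) (m : ℕ) (hm : 1 ≤ m) (c : ℝ) (hc : 0 ≤ c) :
    testIdeal p (a ^ m) c = testIdeal p a (c * m) :=
  stmt8_testIdeal_pow_general p hfin hflat a m c
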